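/- arXiv:2604.10298 — 4 statements merged into one kernel-verified Lean document; each statement's English description precedes it below -/
import Mathlib

section
/- For every z in the open unit disk D one has Re( z·φ'(z) / (φ(z) − 1) ) = Re( (1 + z/2) / (1 + z/4) ) > 0 whenever z ≠ 0; consequently φ maps D onto a domain starlike with respect to the point φ(0) = 1. -/
/-!
Since `(1 + z/2)/(1 + z/4) = 2 - (1 + z/4)⁻¹` and `‖1 + z/4‖ > 3/4` on the disk, the real
part exceeds `2 - 4/3`.

The domain `φ(D)` is the image of the disk `‖s - 1‖ < 1/2` under `s ↦ s²`, and it is in fact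
convex. For `w = s²` with `Re s ≥ 0` one has
`(‖w‖ - 1/4)² + 1/2 - 2 Re w = (‖s - 1‖² - 1/4) (‖s‖² + 3/4 + 2 Re s)`,
so the image is `{w | (‖w‖ - 1/4)² + 1/2 < 2 Re w}`. Every such `w` has `‖w‖ > 1/4`, so
`‖w‖ - 1/4` may be replaced by its positive part, which turns the left side into a convex
function of `w`.
-/

open Complex Metric Set

theorem re_div_pos_of_norm_lt_one {z : ℂ} (hz : ‖z‖ < 1) :
    0 < ((1 + z / 2) / (1 + z / 4)).re := by
  have hnorm : 3 / 4 < ‖1 + z / 4‖ := by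
    calc (3 / 4 : ℝ) < 1 - ‖z / 4‖ := by rw [norm_div]; norm_num; linarith
      _ ≤ ‖1 + z / 4‖ := by simpa using norm_sub_norm_le (1 : ℂ) (-(z / 4))
  have hne : 1 + z / 4 ≠ 0 := norm_pos_iff.mp (by linarith)
  have hinv : ((1 + z / 4)⁻¹).re < 4 / 3 := calc
      _ ≤ ‖(1 + z / 4)⁻¹‖ := re_le_norm _
      _ = ‖1 + z / 4‖⁻¹ := norm_inv _
      _ < 4 / 3 := by rw [inv_lt_comm₀ (by linarith) (by norm_num)]; linarith
  have hdecomp : (1 + z / 2) / (1 + z / 4) = 2 - (1 + z / 4)⁻¹ := by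
    rw [div_eq_iff hne, sub_mul, inv_mul_cancel₀ hne]; ring
  rw [hdecomp, sub_re, re_ofNat]
  linarith

theorem convexOn_max_norm_sub_sq {E : Type*} [SeminormedAddCommGroup E] [NormedSpace ℝ E]
    (c : ℝ) : ConvexOn ℝ univ (fun w : E => max (‖w‖ - c) 0 ^ 2) := by
  have h : ConvexOn ℝ univ (fun w : E => max (‖w‖ - c) 0) := by
    simp only [sub_eq_add_neg]
    exact ((convexOn_norm convex_univ).add_const (-c)).sup (convexOn_const 0 convex_univ)
  exact h.pow (fun _ _ => le_max_right _ _) 2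

theorem norm_sub_one_lt_half_iff {s : ℂ} (hs : 0 ≤ s.re) :
    ‖s - 1‖ < 1 / 2 ↔ (‖s ^ 2‖ - 1 / 4) ^ 2 + 1 / 2 < 2 * (s ^ 2).re := by
  have hnorm : ‖s‖ ^ 2 = s.re ^ 2 + s.im ^ 2 := by rw [Complex.sq_norm, normSq_apply]; ring
  have hnorm_sub : ‖s - 1‖ ^ 2 = (s.re - 1) ^ 2 + s.im ^ 2 := by
    rw [Complex.sq_norm, normSq_apply]; simp only [sub_re, one_re, sub_im, one_im, sub_zero]; ring
  have hre : (s ^ 2).re = s.re ^ 2 - s.im ^ 2 := by simp [sq]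
  have hfactor : (‖s ^ 2‖ - 1 / 4) ^ 2 + 1 / 2 - 2 * (s ^ 2).re
      = (‖s - 1‖ ^ 2 - 1 / 4) * (‖s‖ ^ 2 + 3 / 4 + 2 * s.re) := by
    rw [norm_pow, hre, hnorm, hnorm_sub]; ring
  have hpos : 0 < ‖s‖ ^ 2 + 3 / 4 + 2 * s.re := by positivity
  calc ‖s - 1‖ < 1 / 2 ↔ ‖s - 1‖ ^ 2 - 1 / 4 < 0 := by
        rw [sub_neg, ← sq_lt_sq₀ (norm_nonneg _) (by norm_num)]; norm_num
    _ ↔ (‖s - 1‖ ^ 2 - 1 / 4) * (‖s‖ ^ 2 + 3 / 4 + 2 * s.re) < 0 := by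
        rw [← mul_lt_mul_iff_of_pos_right hpos, zero_mul]
    _ ↔ _ := by rw [← hfactor, sub_neg]

theorem sq_image_ball_one_half :
    (fun s : ℂ => s ^ 2) '' ball 1 (1 / 2) =
      {w : ℂ | max (‖w‖ - 1 / 4) 0 ^ 2 + 1 / 2 < 2 * w.re} := by
  ext w
  simp only [mem_image, mem_ball_iff_norm, mem_ofPred_eq]
  constructor
  · rintro ⟨s, hs, rfl⟩
    have hre : 0 ≤ s.re := by
      have := abs_le.mp ((abs_re_le_norm (s - 1)).trans hs.le)
      simp only [sub_re, one_re] at this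
      linarith
    have hnorm : 1 / 2 < ‖s‖ := by
      have := norm_sub_norm_le (1 : ℂ) s
      rw [norm_one, norm_sub_rev] at this
      linarith
    have hnorm_sq : 1 / 4 ≤ ‖s ^ 2‖ := by rw [norm_pow]; nlinarith
    rw [max_eq_left (by linarith)]
    exact (norm_sub_one_lt_half_iff hre).mp hs
  · intro hw
    have hnorm : 1 / 4 < ‖w‖ := by
      nlinarith [re_le_norm w, sq_nonneg (max (‖w‖ - 1 / 4) 0)]
    rw [max_eq_left (by linarith)] at hw
    obtain ⟨s, hre, rfl⟩ : ∃ s : ℂ, 0 ≤ s.re ∧ s ^ 2 = w := by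
      obtain ⟨s, rfl⟩ := IsAlgClosed.exists_pow_nat_eq w two_pos
      rcases le_total 0 s.re with hs | hs
      · exact ⟨s, hs, rfl⟩
      · exact ⟨-s, by simpa using hs, neg_sq s⟩
    exact ⟨s, (norm_sub_one_lt_half_iff hre).mpr hw, rfl⟩

theorem convex_sq_image_ball_one_half : Convex ℝ ((fun s : ℂ => s ^ 2) '' ball 1 (1 / 2)) := by
  have hsublevel : {w : ℂ | max (‖w‖ - 1 / 4) 0 ^ 2 + 1 / 2 < 2 * w.re} =
      {w ∈ univ |
        ((fun w : ℂ => max (‖w‖ - 1 / 4) 0 ^ 2) - ⇑((2 : ℝ) • reLm)) w < -1 / 2} := by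
    ext w
    simp only [mem_ofPred_eq, mem_univ, true_and, Pi.sub_apply, LinearMap.smul_apply, reLm_coe,
      smul_eq_mul]
    constructor <;> intro <;> linarith
  rw [sq_image_ball_one_half, hsublevel]
  exact ((convexOn_max_norm_sub_sq (1 / 4)).sub
    (((2 : ℝ) • reLm).concaveOn convex_univ)).convex_lt _

theorem image_ball_zero_one_half_add_one :
    (fun z : ℂ => 1 + z / 2) '' ball 0 1 = ball 1 (1 / 2) := by
  ext w
  simp only [mem_image, mem_ball_iff_norm, sub_zero]
  constructor
  · rintro ⟨z, hz, rfl⟩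
    rw [add_sub_cancel_left, norm_div, Complex.norm_two]
    linarith
  · intro hw
    refine ⟨2 * (w - 1), ?_, by ring⟩
    rw [norm_mul, Complex.norm_two]
    linarith

/-- For every nonzero `z` in the open unit disk,
`Re (z·φ'(z)/(φ(z) − 1)) = Re ((1 + z/2)/(1 + z/4)) > 0`, where `φ(z) = (1 + z/2)²`;
consequently `φ` maps the unit disk onto a domain starlike with respect to
`φ(0) = 1`. -/
theorem phi_starlike_wrt_one :
    (∀ z ∈ Metric.ball (0 : ℂ) 1, z ≠ 0 →
      (z * (1 + z / 2) / ((1 + z / 2) ^ 2 - 1)).re = ((1 + z / 2) / (1 + z / 4)).re ∧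
      0 < ((1 + z / 2) / (1 + z / 4)).re) ∧
    StarConvex ℝ (1 : ℂ) ((fun z : ℂ => (1 + z / 2) ^ 2) '' Metric.ball (0 : ℂ) 1) := by
  refine ⟨fun z hz hz0 => ⟨?_, re_div_pos_of_norm_lt_one (mem_ball_zero_iff.mp hz)⟩, ?_⟩
  · rw [show (1 + z / 2) ^ 2 - 1 = z * (1 + z / 4) by ring, mul_div_mul_left _ _ hz0]
  · have himage : (fun z : ℂ => (1 + z / 2) ^ 2) '' ball 0 1 =
        (fun s : ℂ => s ^ 2) '' ball 1 (1 / 2) := by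
      rw [← image_ball_zero_one_half_add_one, image_image]
    rw [himage]
    exact convex_sq_image_ball_one_half.starConvex ⟨1, mem_ball_self (by norm_num), one_pow 2⟩
end

section
/- Let −1 < B < A ≤ 1 and set p(z) = (1 + Az)/(1 + Bz). If 1/4 ≤ (1 − A)/(1 − B) and (1 + A)/(1 + B) ≤ 9/4, then p is subordinate to φ(z) = (1 + z/2)²; that is, there exists an analytic function w : D → ℂ with w(0) = 0 and |w(z)| < 1 for all z ∈ D such that p(z) = φ(w(z)) for all z ∈ D. -/
/-!
`p` maps the unit disk into the open disk with diameter `[p(-1), p(1)] ⊆ [1/4, 9/4]`.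
Every `v` in such a disk satisfies `|v|² − |v|/2 + 9/16 < 2 Re v`, and for the principal
square root `s` of `v` (where `4 (Re s)² = 2 (|v| + Re v)` and `|s − 1|² = |v| − 2 Re s + 1`)
this inequality says exactly `|s − 1| < 1/2`. Hence `w = 2 (√p − 1)` works; it is analytic
because `Re p > 0`.
-/

open Complex

lemma norm_add_lt_norm_one_add_mul {B : ℝ} (hB : |B| < 1) {z : ℂ} (hz : ‖z‖ < 1) :
    ‖(B : ℂ) + z‖ < ‖1 + (B : ℂ) * z‖ := by
  have hB2 : B ^ 2 < 1 := by simpa using sq_lt_sq.2 (hB.trans_eq (abs_one).symm)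
  have hz2 : normSq z < 1 := by
    simpa [← Complex.sq_norm] using pow_lt_one₀ (norm_nonneg z) hz two_ne_zero
  have key : normSq (1 + (B : ℂ) * z) - normSq ((B : ℂ) + z)
      = (1 - B ^ 2) * (1 - normSq z) := by
    simp only [normSq_apply, add_re, add_im, mul_re, mul_im, one_re, one_im, ofReal_re, ofReal_im]
    ring
  rw [norm_def, norm_def]
  exact Real.sqrt_lt_sqrt (normSq_nonneg _) (by nlinarith)

lemma one_add_mul_ne_zero {B : ℝ} (hB : |B| < 1) {z : ℂ} (hz : ‖z‖ < 1) :
    1 + (B : ℂ) * z ≠ 0 :=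
  norm_pos_iff.1 ((norm_nonneg _).trans_lt (norm_add_lt_norm_one_add_mul hB hz))

lemma norm_div_sub_midpoint_lt {A B : ℝ} (hB : |B| < 1) (hBA : B < A) {z : ℂ} (hz : ‖z‖ < 1) :
    ‖(1 + (A : ℂ) * z) / (1 + (B : ℂ) * z) - (((1 - A) / (1 - B) + (1 + A) / (1 + B)) / 2 : ℝ)‖
      < ((1 + A) / (1 + B) - (1 - A) / (1 - B)) / 2 := by
  obtain ⟨hB₀, hB₁⟩ := abs_lt.1 hB
  have hsub : 1 - B ≠ 0 := by linarith
  have hadd : 1 + B ≠ 0 := by linarith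
  have hsubC : (1 : ℂ) - B ≠ 0 := by exact_mod_cast hsub
  have haddC : (1 : ℂ) + B ≠ 0 := by exact_mod_cast hadd
  have hprod := mul_ne_zero hsubC haddC
  have hden := one_add_mul_ne_zero hB hz
  have hr : ((1 + A) / (1 + B) - (1 - A) / (1 - B)) / 2 = (A - B) / ((1 - B) * (1 + B)) := by
    field_simp; ring
  have hc : ((1 - A) / (1 - B) + (1 + A) / (1 + B)) / 2 = (1 - A * B) / ((1 - B) * (1 + B)) := by
    field_simp; ring
  have hr_pos : 0 < (A - B) / ((1 - B) * (1 + B)) := div_pos (by linarith) (by nlinarith)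
  have hmobius : (1 + (A : ℂ) * z) / (1 + (B : ℂ) * z)
      - (((1 - A * B) / ((1 - B) * (1 + B)) : ℝ) : ℂ)
      = ((A - B) / ((1 - B) * (1 + B)) : ℝ) * ((B + z) / (1 + B * z)) := by
    push_cast
    rw [div_sub_div _ _ hden hprod, div_mul_div_comm,
      div_eq_div_iff (mul_ne_zero hden hprod) (mul_ne_zero hprod hden)]
    ring
  rw [hr, hc, hmobius, norm_mul, norm_real, Real.norm_of_nonneg hr_pos.le, norm_div]
  exact mul_lt_of_lt_one_right hr_pos
    ((div_lt_one ((norm_nonneg _).trans_lt (norm_add_lt_norm_one_add_mul hB hz))).2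
      (norm_add_lt_norm_one_add_mul hB hz))

lemma sq_sub_div_two_add_lt {a b t x : ℝ} (ha : 1 / 4 ≤ a) (hb : b ≤ 9 / 4) (hab : a < b)
    (hxt : x ≤ t) (h : t ^ 2 + a * b < (a + b) * x) : t ^ 2 - t / 2 + 9 / 16 < 2 * x := by
  have hab_pos : 0 < a + b := by linarith
  have htt : t ^ 2 + a * b < (a + b) * t := h.trans_le (by gcongr)
  have hta : a ≤ t := by nlinarith
  have htb : t ≤ b := by nlinarith
  have hFa : 0 ≤ (a + b) * (a - 1 / 4) * (9 / 4 - a) :=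
    mul_nonneg (mul_nonneg hab_pos.le (by linarith)) (by linarith)
  have hFb : 0 ≤ (a + b) * (b - 1 / 4) * (9 / 4 - b) :=
    mul_nonneg (mul_nonneg hab_pos.le (by linarith)) (by linarith)
  -- `F(t) := 2(t² + ab) − (a + b)(t² − t/2 + 9/16)` has the values `hFa`, `hFb` at `a`, `b`;
  -- it is increasing on `[a, b]` if `a + b ≤ 2` and concave if `a + b > 2`.
  have hF : 0 ≤ 2 * (t ^ 2 + a * b) - (a + b) * (t ^ 2 - t / 2 + 9 / 16) := by
    rcases le_or_gt (a + b) 2 with hc | hc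
    · nlinarith [mul_nonneg (sub_nonneg.2 hta)
        (by nlinarith : (0:ℝ) ≤ (2 - a - b) * (t + a) + (a + b) / 2)]
    · nlinarith [mul_nonneg (mul_nonneg (sub_nonneg.2 hta) (sub_nonneg.2 htb))
        (mul_nonneg (by linarith : (0:ℝ) ≤ a + b - 2) (by linarith : (0:ℝ) ≤ b - a)),
        mul_nonneg (sub_nonneg.2 htb) hFa, mul_nonneg (sub_nonneg.2 hta) hFb]
  nlinarith

lemma sq_norm_sub_div_two_add_lt_of_norm_sub_lt {a b : ℝ} {v : ℂ} (ha : 1 / 4 ≤ a)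
    (hb : b ≤ 9 / 4) (hv : ‖v - (((a + b) / 2 : ℝ) : ℂ)‖ < (b - a) / 2) :
    ‖v‖ ^ 2 - ‖v‖ / 2 + 9 / 16 < 2 * v.re := by
  have hsq : ‖v - (((a + b) / 2 : ℝ) : ℂ)‖ ^ 2
      = ‖v‖ ^ 2 - (a + b) * v.re + ((a + b) / 2) ^ 2 := by
    rw [Complex.sq_norm, Complex.sq_norm, normSq_sub, normSq_ofReal, conj_ofReal, re_mul_ofReal]
    ring
  have hlt := pow_lt_pow_left₀ hv (norm_nonneg _) two_ne_zero
  exact sq_sub_div_two_add_lt ha hb (by linarith [(norm_nonneg _).trans_lt hv]) (re_le_norm v)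
    (by nlinarith)

lemma norm_cpow_inv_two_sub_one_lt_half {v : ℂ} (h : ‖v‖ ^ 2 - ‖v‖ / 2 + 9 / 16 < 2 * v.re) :
    ‖v ^ (2⁻¹ : ℂ) - 1‖ < 1 / 2 := by
  set s := v ^ (2⁻¹ : ℂ)
  have hnorm : ‖s‖ ^ 2 = ‖v‖ := by rw [← norm_pow, cpow_ofNat_inv_pow]
  have hre : (‖v‖ + 3 / 4) / 2 < s.re := by
    rw [cpow_inv_two_re, Real.lt_sqrt (by positivity)]
    linarith
  have hsq : ‖s - 1‖ ^ 2 = ‖s‖ ^ 2 - 2 * s.re + 1 := by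
    rw [Complex.sq_norm, Complex.sq_norm, normSq_sub, map_one (starRingEnd ℂ), mul_one,
      normSq_one]
    ring
  exact lt_of_pow_lt_pow_left₀ 2 (by norm_num) (by nlinarith)

/-- Let `−1 < B < A ≤ 1` and `p(z) = (1 + Az)/(1 + Bz)`. If `1/4 ≤ (1 − A)/(1 − B)`
and `(1 + A)/(1 + B) ≤ 9/4`, then `p` is subordinate to `φ(z) = (1 + z/2)²`: there is
an analytic `w` on the unit disk with `w(0) = 0`, `|w(z)| < 1`, and `p(z) = φ(w(z))`. -/
theorem p_subordinate_phi (A B : ℝ) (hB : -1 < B) (hBA : B < A) (hA : A ≤ 1)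
    (h1 : 1 / 4 ≤ (1 - A) / (1 - B)) (h2 : (1 + A) / (1 + B) ≤ 9 / 4) :
    ∃ w : ℂ → ℂ, AnalyticOnNhd ℂ w (Metric.ball (0 : ℂ) 1) ∧ w 0 = 0 ∧
      (∀ z ∈ Metric.ball (0 : ℂ) 1, ‖w z‖ < 1) ∧
      (∀ z ∈ Metric.ball (0 : ℂ) 1,
        (1 + (A : ℂ) * z) / (1 + (B : ℂ) * z) = (1 + w z / 2) ^ 2) := by
  have hB_abs : |B| < 1 := abs_lt.2 ⟨hB, hBA.trans_le hA⟩
  set p : ℂ → ℂ := fun z ↦ (1 + (A : ℂ) * z) / (1 + (B : ℂ) * z)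
  have hp : ∀ z ∈ Metric.ball (0 : ℂ) 1, ‖p z‖ ^ 2 - ‖p z‖ / 2 + 9 / 16 < 2 * (p z).re :=
    fun z hz ↦ sq_norm_sub_div_two_add_lt_of_norm_sub_lt h1 h2
      (norm_div_sub_midpoint_lt hB_abs hBA (mem_ball_zero_iff.1 hz))
  refine ⟨fun z ↦ 2 * (p z ^ (2⁻¹ : ℂ) - 1), fun z hz ↦ ?_, by simp [p], fun z hz ↦ ?_,
    fun z hz ↦ ?_⟩
  · have hden := one_add_mul_ne_zero hB_abs (mem_ball_zero_iff.1 hz)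
    have hslit : p z ∈ slitPlane := Or.inl (by nlinarith [hp z hz, sq_nonneg (‖p z‖ - 1 / 4)])
    fun_prop (disch := assumption)
  · rw [norm_mul, Complex.norm_two]
    linarith [norm_cpow_inv_two_sub_one_lt_half (hp z hz)]
  · rw [mul_div_cancel_left₀ _ two_ne_zero, add_sub_cancel, cpow_ofNat_inv_pow]
end

section
/- The open disk {w ∈ ℂ : |w − 5/4| < 1} is contained in the image φ(D) of the open unit disk D under φ(z) = (1 + z/2)². -/
/-!
Every `w` has a square root `u` with `0 ≤ re u`, and `w = φ (2 (u - 1))`, so it suffices to show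
`‖u - 1‖ < 1/2` when `‖u² - 5/4‖ < 1`. With `a = re u` and `s = ‖u‖²`, the hypothesis reads
`s² + 5s/2 + 9/16 < 5a²`; since `a² ≤ s` this gives `(s + 3/4)² < 4a²`, i.e. `s - 2a + 1 < 1/4`,
which is `‖u - 1‖² < 1/4`.
-/

namespace Complex

theorem exists_sq_eq_and_re_nonneg (w : ℂ) : ∃ u : ℂ, u ^ 2 = w ∧ 0 ≤ u.re := by
  obtain ⟨u, rfl⟩ := IsAlgClosed.exists_eq_mul_self w
  rcases le_total 0 u.re with hu | hu
  · exact ⟨u, sq u, hu⟩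
  · exact ⟨-u, by ring, by simpa using hu⟩

theorem norm_sub_one_lt_half_of_norm_sq_sub_lt {u : ℂ} (hu : 0 ≤ u.re)
    (h : ‖u ^ 2 - 5 / 4‖ < 1) : ‖u - 1‖ < 1 / 2 := by
  set a := u.re
  set b := u.im
  have h_sq : (a ^ 2 - b ^ 2 - 5 / 4) ^ 2 + (2 * a * b) ^ 2 < 1 := by
    have h_norm : ‖u ^ 2 - 5 / 4‖ ^ 2 = (a ^ 2 - b ^ 2 - 5 / 4) ^ 2 + (2 * a * b) ^ 2 := by
      rw [Complex.sq_norm, normSq_apply]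
      simp only [a, b, sub_re, sub_im, sq, mul_re, mul_im]
      norm_num
      ring
    nlinarith [norm_nonneg (u ^ 2 - 5 / 4)]
  have h_re : (a ^ 2 + b ^ 2) + 3 / 4 < 2 * a := by
    have h_four : ((a ^ 2 + b ^ 2) + 3 / 4) ^ 2 < (2 * a) ^ 2 := by
      nlinarith [sq_nonneg b]
    exact abs_lt_of_sq_lt_sq' h_four (by positivity) |>.2
  have h_norm_sq : ‖u - 1‖ ^ 2 < (1 / 2) ^ 2 := by
    rw [Complex.sq_norm, normSq_apply]
    simp only [sub_re, one_re, sub_im, one_im]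
    nlinarith
  exact lt_of_pow_lt_pow_left₀ 2 (by norm_num) h_norm_sq

end Complex

/-- The open disk of radius `1` centered at `5/4` is contained in the image of the
open unit disk under `φ(z) = (1 + z/2)²`. -/
theorem ball_subset_phi_image :
    Metric.ball ((5 : ℂ) / 4) 1 ⊆ (fun z : ℂ => (1 + z / 2) ^ 2) '' Metric.ball (0 : ℂ) 1 := by
  intro w hw
  obtain ⟨u, rfl, hu⟩ := Complex.exists_sq_eq_and_re_nonneg w
  have h_half : ‖u - 1‖ < 1 / 2 :=
    Complex.norm_sub_one_lt_half_of_norm_sq_sub_lt hu (by simpa [dist_eq_norm] using hw)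
  refine ⟨2 * (u - 1), ?_, by ring⟩
  rw [mem_ball_zero_iff, norm_mul, Complex.norm_two]
  linarith
end

section
/- For all real numbers p and x with 0 ≤ p ≤ 1 and 0 ≤ x ≤ 1, the polynomial F(p,x) = −61p⁶ + 464p⁵ − 1024p⁴ − 464p³ + 2048p² + (244p⁶ + 640p⁵ + 620p⁴ + 448p³ − 864p² − 1088p)·x + (−248p⁶ − 720p⁵ + 1856p⁴ + 976p³ − 2504p² − 256p + 896)·x² + (64p⁶ − 640p⁵ − 416p⁴ − 448p³ + 640p² + 1088p − 288)·x³ + (−128p⁶ + 256p⁵ + 384p⁴ − 512p³ − 384p² + 256p + 128)·x⁴ satisfies F(p,x) ≥ 0, with equality if and only if (p,x) = (0,0). -/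
set_option maxHeartbeats 1000000

private lemma aux {p q x y : ℝ} (hp : 0 ≤ p) (hq : 0 ≤ q) (hx : 0 ≤ x) (hy : 0 ≤ y)
    (a b e f : ℕ) : 0 ≤ p^a * q^b * (x^e * y^f) :=
  mul_nonneg (mul_nonneg (pow_nonneg hp a) (pow_nonneg hq b))
    (mul_nonneg (pow_nonneg hx e) (pow_nonneg hy f))

set_option maxHeartbeats 2000000 in
private lemma key (p x : ℝ) (hp0 : 0 ≤ p) (hp1 : p ≤ 1) (hx0 : 0 ≤ x) (hx1 : x ≤ 1) :
    300 * (p ^ 2 + x ^ 2) ≤ -61 * p ^ 6 + 464 * p ^ 5 - 1024 * p ^ 4 - 464 * p ^ 3 + 2048 * p ^ 2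
        + (244 * p ^ 6 + 640 * p ^ 5 + 620 * p ^ 4 + 448 * p ^ 3 - 864 * p ^ 2
            - 1088 * p) * x
        + (-248 * p ^ 6 - 720 * p ^ 5 + 1856 * p ^ 4 + 976 * p ^ 3 - 2504 * p ^ 2
            - 256 * p + 896) * x ^ 2
        + (64 * p ^ 6 - 640 * p ^ 5 - 416 * p ^ 4 - 448 * p ^ 3 + 640 * p ^ 2
            + 1088 * p - 288) * x ^ 3
        + (-128 * p ^ 6 + 256 * p ^ 5 + 384 * p ^ 4 - 512 * p ^ 3 - 384 * p ^ 2
            + 256 * p + 128) * x ^ 4 := by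
  have hq : (0:ℝ) ≤ 1 - p := by linarith
  have hy : (0:ℝ) ≤ 1 - x := by linarith
  have hsum : (0:ℝ) ≤ (17350837328391757/163291584542784 : ℝ) * (p^0 * (1-p)^7 * (x^2 * (1-x)^2)) + (11833514336540567/163291584542784 : ℝ) * (p^0 * (1-p)^7 * (x^3 * (1-x)^2)) + (5091805339123375/13607632045232 : ℝ) * (p^1 * (1-p)^0 * (x^1 * (1-x)^4)) + (20342945902274033/13607632045232 : ℝ) * (p^1 * (1-p)^4 * (x^3 * (1-x)^1)) + (67338365518857787/122468688407088 : ℝ) * (p^1 * (1-p)^5 * (x^5 * (1-x)^0)) + (55803450155940539/163291584542784 : ℝ) * (p^1 * (1-p)^6 * (x^2 * (1-x)^3)) + (7814421394461069/1700954005654 : ℝ) * (p^2 * (1-p)^1 * (x^1 * (1-x)^3)) + (10903902727619651/20411448067848 : ℝ) * (p^2 * (1-p)^5 * (x^0 * (1-x)^5)) + (14290384847644175/30617172101772 : ℝ) * (p^2 * (1-p)^5 * (x^5 * (1-x)^0)) + (7662655960752075/6803816022616 : ℝ) * (p^3 * (1-p)^4 * (x^0 * (1-x)^5)) + (362333956788216893/81645792271392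 : ℝ) * (p^4 * (1-p)^1 * (x^2 * (1-x)^3)) + (360787307375513947/244937376814176 : ℝ) * (p^4 * (1-p)^3 * (x^2 * (1-x)^3)) + (8467110414749185/20411448067848 : ℝ) * (p^5 * (1-p)^1 * (x^1 * (1-x)^4)) + (15232065801425881/40822896135696 : ℝ) * (p^6 * (1-p)^0 * (x^0 * (1-x)^5)) + (15043351836515951/54430528180928 : ℝ) * (p^6 * (1-p)^0 * (x^2 * (1-x)^3)) + (14129598693325237/20411448067848 : ℝ) * (p^6 * (1-p)^0 * (x^4 * (1-x)^1)) + (9247303353249899/40822896135696 : ℝ) * (p^7 * (1-p)^0 * (x^2 * (1-x)^2)) + (3437031667506793/20411448067848 : ℝ) * (p^7 * (1-p)^0 * (x^4 * (1-x)^0)) + (10140110023050067/40822896135696 : ℝ) * ((p-x)^2 * (p^0 * (1-p)^1 * (x^0 * (1-x)^0))) + (101667200759236/850477002827 : ℝ) * ((p-x)^2 * (p^0 * (1-p)^1 * (x^1 * (1-x)^0))) + (1371679520251233/13607632045232 : ℝ) * ((p-x)^2 * (p^0 * (1-p)^3 * (x^1 * (1-x)^1))) + (10496374132702157/40822896135696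 : ℝ) * ((p-x)^2 * (p^1 * (1-p)^1 * (x^0 * (1-x)^0))) + (9077764009033679/20411448067848 : ℝ) * ((p-x)^2 * (p^1 * (1-p)^2 * (x^0 * (1-x)^0))) + (54707522350024805/122468688407088 : ℝ) * ((p-x)^2 * (p^1 * (1-p)^3 * (x^3 * (1-x)^0))) + (18585991793914855/7654293025443 : ℝ) * ((p-x)^2 * (p^2 * (1-p)^2 * (x^2 * (1-x)^0))) + (19566395341534709/20411448067848 : ℝ) * ((p-x)^2 * (p^3 * (1-p)^0 * (x^3 * (1-x)^0))) + (135950035966423507/61234344203544 : ℝ) * ((p-x)^2 * (p^3 * (1-p)^2 * (x^2 * (1-x)^0))) + (11833514336540567/163291584542784 : ℝ) * ((2*p-x)^2 * (p^0 * (1-p)^0 * (x^0 * (1-x)^3))) + (734365705780355/40822896135696 : ℝ) * ((2*p-x)^2 * (p^0 * (1-p)^4 * (x^1 * (1-x)^0))) + (1723562039397917/10205724033924 : ℝ) * ((2*p-x)^2 * (p^0 * (1-p)^5 * (x^0 * (1-x)^1))) + (340713558314951/6803816022616 : ℝ) * ((2*p-x)^2 * (p^0 * (1-p)^5 * (x^2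 * (1-x)^0))) + (281108949942475/3401908011308 : ℝ) * ((2*p-x)^2 * (p^1 * (1-p)^2 * (x^1 * (1-x)^2))) + (33953760529981849/81645792271392 : ℝ) * ((2*p-x)^2 * (p^1 * (1-p)^4 * (x^0 * (1-x)^1))) + (47793458834435665/81645792271392 : ℝ) * ((2*p-x)^2 * (p^1 * (1-p)^4 * (x^0 * (1-x)^3))) + (1548887988983459/81645792271392 : ℝ) * ((2*p-x)^2 * (p^1 * (1-p)^4 * (x^2 * (1-x)^1))) + (4795615400417701/10205724033924 : ℝ) * ((2*p-x)^2 * (p^2 * (1-p)^1 * (x^0 * (1-x)^2))) + (43822413933715683/54430528180928 : ℝ) * ((2*p-x)^2 * (p^2 * (1-p)^2 * (x^0 * (1-x)^3))) + (35210303358846019/40822896135696 : ℝ) * ((2*p-x)^2 * (p^2 * (1-p)^3 * (x^0 * (1-x)^3))) + (324640441486385/2551431008481 : ℝ) * ((2*p-x)^2 * (p^3 * (1-p)^1 * (x^2 * (1-x)^0))) + (3972323981122031/20411448067848 : ℝ) * ((2*p-x)^2 * (p^4 * (1-p)^0 * (x^1 * (1-x)^0))) + (1603696914363119/13607632045232 :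 ℝ) * ((2*p-x)^2 * (p^4 * (1-p)^1 * (x^0 * (1-x)^0))) + (12758021452630193/40822896135696 : ℝ) * ((2*p-x)^2 * (p^4 * (1-p)^1 * (x^1 * (1-x)^0))) + (15116372015796869/40822896135696 : ℝ) * ((2*p-x)^2 * (p^4 * (1-p)^1 * (x^2 * (1-x)^1))) + (6370031540578775/13607632045232 : ℝ) * ((2*p-x)^2 * (p^5 * (1-p)^0 * (x^1 * (1-x)^2))) + (986634104536088/2551431008481 : ℝ) * ((2*p-x)^2 * (p^5 * (1-p)^0 * (x^2 * (1-x)^1))) := (add_nonneg (add_nonneg (add_nonneg (add_nonneg (add_nonneg (add_nonneg (add_nonneg (add_nonneg (add_nonneg (add_nonneg (add_nonneg (add_nonneg (add_nonneg (add_nonneg (add_nonneg (add_nonneg (add_nonneg (add_nonneg (add_nonneg (add_nonneg (add_nonneg (add_nonneg (add_nonneg (add_nonneg (add_nonneg (add_nonneg (add_nonneg (add_nonneg (add_nonneg (add_nonneg (add_nonneg (add_nonneg (add_nonneg (add_nonneg (add_nonneg (add_nonneg (add_nonneg (add_nonneg (add_nonneg (add_nonneg (add_nonneg (add_nonneg (add_nonneg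 (add_nonneg (mul_nonneg (by norm_num) (aux hp0 hq hx0 hy 0 7 2 2)) (mul_nonneg (by norm_num) (aux hp0 hq hx0 hy 0 7 3 2))) (mul_nonneg (by norm_num) (aux hp0 hq hx0 hy 1 0 1 4))) (mul_nonneg (by norm_num) (aux hp0 hq hx0 hy 1 4 3 1))) (mul_nonneg (by norm_num) (aux hp0 hq hx0 hy 1 5 5 0))) (mul_nonneg (by norm_num) (aux hp0 hq hx0 hy 1 6 2 3))) (mul_nonneg (by norm_num) (aux hp0 hq hx0 hy 2 1 1 3))) (mul_nonneg (by norm_num) (aux hp0 hq hx0 hy 2 5 0 5))) (mul_nonneg (by norm_num) (aux hp0 hq hx0 hy 2 5 5 0))) (mul_nonneg (by norm_num) (aux hp0 hq hx0 hy 3 4 0 5))) (mul_nonneg (by norm_num) (aux hp0 hq hx0 hy 4 1 2 3))) (mul_nonneg (by norm_num) (aux hp0 hq hx0 hy 4 3 2 3))) (mul_nonneg (by norm_num) (aux hp0 hq hx0 hy 5 1 1 4))) (mul_nonneg (by norm_num) (aux hp0 hq hx0 hy 6 0 0 5))) (mul_nonneg (by norm_num) (aux hp0 hq hx0 hy 6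 0 2 3))) (mul_nonneg (by norm_num) (aux hp0 hq hx0 hy 6 0 4 1))) (mul_nonneg (by norm_num) (aux hp0 hq hx0 hy 7 0 2 2))) (mul_nonneg (by norm_num) (aux hp0 hq hx0 hy 7 0 4 0))) (mul_nonneg (by norm_num) (mul_nonneg (sq_nonneg (p-x)) (aux hp0 hq hx0 hy 0 1 0 0)))) (mul_nonneg (by norm_num) (mul_nonneg (sq_nonneg (p-x)) (aux hp0 hq hx0 hy 0 1 1 0)))) (mul_nonneg (by norm_num) (mul_nonneg (sq_nonneg (p-x)) (aux hp0 hq hx0 hy 0 3 1 1)))) (mul_nonneg (by norm_num) (mul_nonneg (sq_nonneg (p-x)) (aux hp0 hq hx0 hy 1 1 0 0)))) (mul_nonneg (by norm_num) (mul_nonneg (sq_nonneg (p-x)) (aux hp0 hq hx0 hy 1 2 0 0)))) (mul_nonneg (by norm_num) (mul_nonneg (sq_nonneg (p-x)) (aux hp0 hq hx0 hy 1 3 3 0)))) (mul_nonneg (by norm_num) (mul_nonneg (sq_nonneg (p-x)) (aux hp0 hq hx0 hy 2 2 2 0)))) (mul_nonneg (by norm_num) (mul_nonneg (sq_nonneg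 (p-x)) (aux hp0 hq hx0 hy 3 0 3 0)))) (mul_nonneg (by norm_num) (mul_nonneg (sq_nonneg (p-x)) (aux hp0 hq hx0 hy 3 2 2 0)))) (mul_nonneg (by norm_num) (mul_nonneg (sq_nonneg (2*p-x)) (aux hp0 hq hx0 hy 0 0 0 3)))) (mul_nonneg (by norm_num) (mul_nonneg (sq_nonneg (2*p-x)) (aux hp0 hq hx0 hy 0 4 1 0)))) (mul_nonneg (by norm_num) (mul_nonneg (sq_nonneg (2*p-x)) (aux hp0 hq hx0 hy 0 5 0 1)))) (mul_nonneg (by norm_num) (mul_nonneg (sq_nonneg (2*p-x)) (aux hp0 hq hx0 hy 0 5 2 0)))) (mul_nonneg (by norm_num) (mul_nonneg (sq_nonneg (2*p-x)) (aux hp0 hq hx0 hy 1 2 1 2)))) (mul_nonneg (by norm_num) (mul_nonneg (sq_nonneg (2*p-x)) (aux hp0 hq hx0 hy 1 4 0 1)))) (mul_nonneg (by norm_num) (mul_nonneg (sq_nonneg (2*p-x)) (aux hp0 hq hx0 hy 1 4 0 3)))) (mul_nonneg (by norm_num) (mul_nonneg (sq_nonneg (2*p-x)) (aux hp0 hq hx0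 hy 1 4 2 1)))) (mul_nonneg (by norm_num) (mul_nonneg (sq_nonneg (2*p-x)) (aux hp0 hq hx0 hy 2 1 0 2)))) (mul_nonneg (by norm_num) (mul_nonneg (sq_nonneg (2*p-x)) (aux hp0 hq hx0 hy 2 2 0 3)))) (mul_nonneg (by norm_num) (mul_nonneg (sq_nonneg (2*p-x)) (aux hp0 hq hx0 hy 2 3 0 3)))) (mul_nonneg (by norm_num) (mul_nonneg (sq_nonneg (2*p-x)) (aux hp0 hq hx0 hy 3 1 2 0)))) (mul_nonneg (by norm_num) (mul_nonneg (sq_nonneg (2*p-x)) (aux hp0 hq hx0 hy 4 0 1 0)))) (mul_nonneg (by norm_num) (mul_nonneg (sq_nonneg (2*p-x)) (aux hp0 hq hx0 hy 4 1 0 0)))) (mul_nonneg (by norm_num) (mul_nonneg (sq_nonneg (2*p-x)) (aux hp0 hq hx0 hy 4 1 1 0)))) (mul_nonneg (by norm_num) (mul_nonneg (sq_nonneg (2*p-x)) (aux hp0 hq hx0 hy 4 1 2 1)))) (mul_nonneg (by norm_num) (mul_nonneg (sq_nonneg (2*p-x)) (aux hp0 hq hx0 hy 5 0 1 2)))) (mul_nonneg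 (by norm_num) (mul_nonneg (sq_nonneg (2*p-x)) (aux hp0 hq hx0 hy 5 0 2 1))))
  have hid : (-61 * p ^ 6 + 464 * p ^ 5 - 1024 * p ^ 4 - 464 * p ^ 3 + 2048 * p ^ 2
        + (244 * p ^ 6 + 640 * p ^ 5 + 620 * p ^ 4 + 448 * p ^ 3 - 864 * p ^ 2
            - 1088 * p) * x
        + (-248 * p ^ 6 - 720 * p ^ 5 + 1856 * p ^ 4 + 976 * p ^ 3 - 2504 * p ^ 2
            - 256 * p + 896) * x ^ 2
        + (64 * p ^ 6 - 640 * p ^ 5 - 416 * p ^ 4 - 448 * p ^ 3 + 640 * p ^ 2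
            + 1088 * p - 288) * x ^ 3
        + (-128 * p ^ 6 + 256 * p ^ 5 + 384 * p ^ 4 - 512 * p ^ 3 - 384 * p ^ 2
            + 256 * p + 128) * x ^ 4) - 300 * (p ^ 2 + x ^ 2) = (17350837328391757/163291584542784 : ℝ) * (p^0 * (1-p)^7 * (x^2 * (1-x)^2)) + (11833514336540567/163291584542784 : ℝ) * (p^0 * (1-p)^7 * (x^3 * (1-x)^2)) + (5091805339123375/13607632045232 : ℝ) * (p^1 * (1-p)^0 * (x^1 * (1-x)^4)) + (20342945902274033/13607632045232 : ℝ) * (p^1 * (1-p)^4 * (x^3 * (1-x)^1)) + (67338365518857787/122468688407088 : ℝ) * (p^1 * (1-p)^5 * (x^5 * (1-x)^0)) + (55803450155940539/163291584542784 : ℝ) * (p^1 * (1-p)^6 * (x^2 * (1-x)^3)) + (7814421394461069/1700954005654 : ℝ) * (p^2 * (1-p)^1 * (x^1 * (1-x)^3)) + (10903902727619651/20411448067848 : ℝ) * (p^2 * (1-p)^5 * (x^0 * (1-x)^5)) + (14290384847644175/30617172101772 : ℝ) * (p^2 * (1-p)^5 * (x^5 * (1-x)^0)) + (7662655960752075/6803816022616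 : ℝ) * (p^3 * (1-p)^4 * (x^0 * (1-x)^5)) + (362333956788216893/81645792271392 : ℝ) * (p^4 * (1-p)^1 * (x^2 * (1-x)^3)) + (360787307375513947/244937376814176 : ℝ) * (p^4 * (1-p)^3 * (x^2 * (1-x)^3)) + (8467110414749185/20411448067848 : ℝ) * (p^5 * (1-p)^1 * (x^1 * (1-x)^4)) + (15232065801425881/40822896135696 : ℝ) * (p^6 * (1-p)^0 * (x^0 * (1-x)^5)) + (15043351836515951/54430528180928 : ℝ) * (p^6 * (1-p)^0 * (x^2 * (1-x)^3)) + (14129598693325237/20411448067848 : ℝ) * (p^6 * (1-p)^0 * (x^4 * (1-x)^1)) + (9247303353249899/40822896135696 : ℝ) * (p^7 * (1-p)^0 * (x^2 * (1-x)^2)) + (3437031667506793/20411448067848 : ℝ) * (p^7 * (1-p)^0 * (x^4 * (1-x)^0)) + (10140110023050067/40822896135696 : ℝ) * ((p-x)^2 * (p^0 * (1-p)^1 * (x^0 * (1-x)^0))) + (101667200759236/850477002827 : ℝ) * ((p-x)^2 * (p^0 * (1-p)^1 * (x^1 * (1-x)^0))) + (1371679520251233/13607632045232 : ℝ) * ((p-x)^2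 * (p^0 * (1-p)^3 * (x^1 * (1-x)^1))) + (10496374132702157/40822896135696 : ℝ) * ((p-x)^2 * (p^1 * (1-p)^1 * (x^0 * (1-x)^0))) + (9077764009033679/20411448067848 : ℝ) * ((p-x)^2 * (p^1 * (1-p)^2 * (x^0 * (1-x)^0))) + (54707522350024805/122468688407088 : ℝ) * ((p-x)^2 * (p^1 * (1-p)^3 * (x^3 * (1-x)^0))) + (18585991793914855/7654293025443 : ℝ) * ((p-x)^2 * (p^2 * (1-p)^2 * (x^2 * (1-x)^0))) + (19566395341534709/20411448067848 : ℝ) * ((p-x)^2 * (p^3 * (1-p)^0 * (x^3 * (1-x)^0))) + (135950035966423507/61234344203544 : ℝ) * ((p-x)^2 * (p^3 * (1-p)^2 * (x^2 * (1-x)^0))) + (11833514336540567/163291584542784 : ℝ) * ((2*p-x)^2 * (p^0 * (1-p)^0 * (x^0 * (1-x)^3))) + (734365705780355/40822896135696 : ℝ) * ((2*p-x)^2 * (p^0 * (1-p)^4 * (x^1 * (1-x)^0))) + (1723562039397917/10205724033924 : ℝ) * ((2*p-x)^2 * (p^0 * (1-p)^5 * (x^0 * (1-x)^1))) + (340713558314951/6803816022616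 : ℝ) * ((2*p-x)^2 * (p^0 * (1-p)^5 * (x^2 * (1-x)^0))) + (281108949942475/3401908011308 : ℝ) * ((2*p-x)^2 * (p^1 * (1-p)^2 * (x^1 * (1-x)^2))) + (33953760529981849/81645792271392 : ℝ) * ((2*p-x)^2 * (p^1 * (1-p)^4 * (x^0 * (1-x)^1))) + (47793458834435665/81645792271392 : ℝ) * ((2*p-x)^2 * (p^1 * (1-p)^4 * (x^0 * (1-x)^3))) + (1548887988983459/81645792271392 : ℝ) * ((2*p-x)^2 * (p^1 * (1-p)^4 * (x^2 * (1-x)^1))) + (4795615400417701/10205724033924 : ℝ) * ((2*p-x)^2 * (p^2 * (1-p)^1 * (x^0 * (1-x)^2))) + (43822413933715683/54430528180928 : ℝ) * ((2*p-x)^2 * (p^2 * (1-p)^2 * (x^0 * (1-x)^3))) + (35210303358846019/40822896135696 : ℝ) * ((2*p-x)^2 * (p^2 * (1-p)^3 * (x^0 * (1-x)^3))) + (324640441486385/2551431008481 : ℝ) * ((2*p-x)^2 * (p^3 * (1-p)^1 * (x^2 * (1-x)^0))) + (3972323981122031/20411448067848 : ℝ) * ((2*p-x)^2 * (p^4 *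 (1-p)^0 * (x^1 * (1-x)^0))) + (1603696914363119/13607632045232 : ℝ) * ((2*p-x)^2 * (p^4 * (1-p)^1 * (x^0 * (1-x)^0))) + (12758021452630193/40822896135696 : ℝ) * ((2*p-x)^2 * (p^4 * (1-p)^1 * (x^1 * (1-x)^0))) + (15116372015796869/40822896135696 : ℝ) * ((2*p-x)^2 * (p^4 * (1-p)^1 * (x^2 * (1-x)^1))) + (6370031540578775/13607632045232 : ℝ) * ((2*p-x)^2 * (p^5 * (1-p)^0 * (x^1 * (1-x)^2))) + (986634104536088/2551431008481 : ℝ) * ((2*p-x)^2 * (p^5 * (1-p)^0 * (x^2 * (1-x)^1))) := by ring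
  linarith [hsum, hid.ge, hid.le]

/-- For `0 ≤ p ≤ 1` and `0 ≤ x ≤ 1`, the polynomial
`F(p,x) = −61p⁶ + 464p⁵ − 1024p⁴ − 464p³ + 2048p²
  + (244p⁶ + 640p⁵ + 620p⁴ + 448p³ − 864p² − 1088p)·x
  + (−248p⁶ − 720p⁵ + 1856p⁴ + 976p³ − 2504p² − 256p + 896)·x²
  + (64p⁶ − 640p⁵ − 416p⁴ − 448p³ + 640p² + 1088p − 288)·x³
  + (−128p⁶ + 256p⁵ + 384p⁴ − 512p³ − 384p² + 256p + 128)·x⁴`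
is nonnegative, with equality iff `(p,x) = (0,0)`. -/
theorem F_nonneg (p x : ℝ) (hp0 : 0 ≤ p) (hp1 : p ≤ 1) (hx0 : 0 ≤ x) (hx1 : x ≤ 1) :
    0 ≤ -61 * p ^ 6 + 464 * p ^ 5 - 1024 * p ^ 4 - 464 * p ^ 3 + 2048 * p ^ 2
        + (244 * p ^ 6 + 640 * p ^ 5 + 620 * p ^ 4 + 448 * p ^ 3 - 864 * p ^ 2
            - 1088 * p) * x
        + (-248 * p ^ 6 - 720 * p ^ 5 + 1856 * p ^ 4 + 976 * p ^ 3 - 2504 * p ^ 2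
            - 256 * p + 896) * x ^ 2
        + (64 * p ^ 6 - 640 * p ^ 5 - 416 * p ^ 4 - 448 * p ^ 3 + 640 * p ^ 2
            + 1088 * p - 288) * x ^ 3
        + (-128 * p ^ 6 + 256 * p ^ 5 + 384 * p ^ 4 - 512 * p ^ 3 - 384 * p ^ 2
            + 256 * p + 128) * x ^ 4 ∧
    ((-61 * p ^ 6 + 464 * p ^ 5 - 1024 * p ^ 4 - 464 * p ^ 3 + 2048 * p ^ 2
        + (244 * p ^ 6 + 640 * p ^ 5 + 620 * p ^ 4 + 448 * p ^ 3 - 864 * p ^ 2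
            - 1088 * p) * x
        + (-248 * p ^ 6 - 720 * p ^ 5 + 1856 * p ^ 4 + 976 * p ^ 3 - 2504 * p ^ 2
            - 256 * p + 896) * x ^ 2
        + (64 * p ^ 6 - 640 * p ^ 5 - 416 * p ^ 4 - 448 * p ^ 3 + 640 * p ^ 2
            + 1088 * p - 288) * x ^ 3
        + (-128 * p ^ 6 + 256 * p ^ 5 + 384 * p ^ 4 - 512 * p ^ 3 - 384 * p ^ 2
            + 256 * p + 128) * x ^ 4 = 0) ↔ (p = 0 ∧ x = 0)) := by
  have hk := key p x hp0 hp1 hx0 hx1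
  have h2 : (0:ℝ) ≤ 300 * (p ^ 2 + x ^ 2) := by positivity
  refine ⟨by linarith, ?_, ?_⟩
  · intro h
    have hp2 : p ^ 2 = 0 := by nlinarith [sq_nonneg p, sq_nonneg x]
    have hx2 : x ^ 2 = 0 := by nlinarith [sq_nonneg p, sq_nonneg x]
    exact ⟨pow_eq_zero_iff (n := 2) (by norm_num) |>.mp hp2,
           pow_eq_zero_iff (n := 2) (by norm_num) |>.mp hx2⟩
  · rintro ⟨rfl, rfl⟩; norm_num
end
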